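/- arXiv:2311.04719 — 4 statements merged into one kernel-verified Lean document; each statement's English description precedes it below -/
import Mathlib

section
/- Let I × N and I' × N' be homogeneous ideals of R ⋉ M (i.e., I, I' are ideals of R, N, N' are submodules of M with I'M ⊆ N' and IM ⊆ N as appropriate). Then (I × N) :_{R⋉M} (I' × N') = ((I :_R I') ∩ (N :_R N')) × (N :_M I'), and in particular this colon ideal is again a homogeneous ideal of R ⋉ M. -/
open TrivSqZeroExt

/-- The ideal `I × N` of the idealization `R ⋉ M` (a homogeneous ideal), for an ideal `I`
of `R` and a submodule `N` of `M` with `I M ⊆ N`. -/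
def idealProd {R M : Type*} [CommRing R] [AddCommGroup M] [Module R M] [Module Rᵐᵒᵖ M]
    [IsCentralScalar R M] (I : Ideal R) (N : Submodule R M)
    (h : ∀ a ∈ I, ∀ m : M, a • m ∈ N) : Ideal (TrivSqZeroExt R M) where
  carrier := {x | x.fst ∈ I ∧ x.snd ∈ N}
  zero_mem' := ⟨I.zero_mem, N.zero_mem⟩
  add_mem' := fun ha hb => ⟨I.add_mem ha.1 hb.1, N.add_mem ha.2 hb.2⟩
  smul_mem' := fun c x hx => by
    refine ⟨I.mul_mem_left c.fst hx.1, ?_⟩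
    show (c * x).snd ∈ N
    rw [snd_mul, op_smul_eq_smul]
    exact N.add_mem (N.smul_mem _ hx.2) (h x.fst hx.1 c.snd)

/-- The colon submodule `N :_M I = {m ∈ M : I m ⊆ N}`. -/
def modColon {R M : Type*} [CommRing R] [AddCommGroup M] [Module R M]
    (N : Submodule R M) (I : Ideal R) : Submodule R M where
  carrier := {m | ∀ r ∈ I, r • m ∈ N}
  zero_mem' := fun r _ => by simp
  add_mem' := fun ha hb r hr => by
    rw [smul_add]; exact N.add_mem (ha r hr) (hb r hr)
  smul_mem' := fun c m hm r hr => by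
    rw [smul_comm]; exact N.smul_mem c (hm r hr)

/-- For homogeneous ideals `I × N` and `I' × N'` of the idealization `R ⋉ M`, one has
`(I × N) : (I' × N') = ((I :_R I') ⊓ (N :_R N')) × (N :_M I')`; in particular the colon
ideal is again homogeneous. -/
theorem colon_idealProd {R M : Type*} [CommRing R] [AddCommGroup M] [Module R M]
    [Module Rᵐᵒᵖ M] [IsCentralScalar R M] (I I' : Ideal R) (N N' : Submodule R M)
    (hIN : ∀ a ∈ I, ∀ m : M, a • m ∈ N) (hIN' : ∀ a ∈ I', ∀ m : M, a • m ∈ N') :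
    Submodule.colon (idealProd I N hIN) (idealProd I' N' hIN') =
      idealProd ((Submodule.colon (I : Submodule R R) (I' : Submodule R R)) ⊓
          Submodule.colon N N') (modColon N I')
        (fun a ha m r hr => by
          have h1 : a * r ∈ I := by
            simpa using Submodule.mem_colon.mp ha.1 r hr
          have h2 := hIN (a * r) h1 m
          rwa [smul_smul, mul_comm]) := by
  ext x
  rw [Submodule.mem_colon]
  constructor
  · intro h
    have key : ∀ r ∈ I', x.fst * r ∈ I ∧ r • x.snd ∈ N := by
      intro r hr
      have := h (inl r) ⟨by simpa using hr, by simp [N'.zero_mem]⟩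
      have h1 : (x * inl r).fst ∈ I := this.1
      have h2 : (x * inl r).snd ∈ N := this.2
      rw [fst_mul, fst_inl] at h1
      rw [snd_mul, snd_inl, fst_inl, smul_zero, zero_add, op_smul_eq_smul] at h2
      exact ⟨h1, h2⟩
    refine ⟨⟨Submodule.mem_colon.mpr fun r hr => ?_, Submodule.mem_colon.mpr fun n hn => ?_⟩,
      fun r hr => (key r hr).2⟩
    · simpa [smul_eq_mul] using (key r hr).1
    · have := h (inr n) ⟨by simpa using I'.zero_mem, by simpa using hn⟩
      have h2 : (x * inr n).snd ∈ N := this.2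
      simpa using h2
  · rintro ⟨⟨h1, h2⟩, h3⟩ y ⟨hy1, hy2⟩
    constructor
    · show (x * y).fst ∈ I
      rw [fst_mul]
      simpa [smul_eq_mul] using Submodule.mem_colon.mp h1 y.fst hy1
    · show (x * y).snd ∈ N
      rw [snd_mul, op_smul_eq_smul]
      exact N.add_mem (Submodule.mem_colon.mp h2 y.snd hy2) (h3 y.fst hy1)
end

section
/- Let (R, 𝔪) be a Noetherian local ring, M a finitely generated R-module, I an 𝔪-primary ideal, and J = I × IM ⊆ R ⋉ M. Then for all n ≥ 0, the quotient (J^{n+1} :_{R⋉M} (𝔪 × M))/J^{n+1} is isomorphic as an R-module to (((I^{n+1} :_R 𝔪) ∩ (I^{n+1}M :_R M))/I^{n+1}) × ((I^{n+1}M :_M 𝔪)/I^{n+1}M). -/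
open TrivSqZeroExt IsLocalRing


open TrivSqZeroExt

theorem socle_aux (R M : Type*) [CommRing R] [IsLocalRing R] [AddCommGroup M] [Module R M]
    [Module Rᵐᵒᵖ M] [IsCentralScalar R M] (P : Ideal R) :
    Nonempty
      (((Submodule.restrictScalars R
            (Submodule.colon
              (idealProd P (P • (⊤ : Submodule R M))
                (fun a ha m => Submodule.smul_mem_smul ha trivial))
              (idealProd (maximalIdeal R) (⊤ : Submodule R M) (fun _ _ _ => trivial)))).map
          (Submodule.restrictScalars R
            (idealProd P (P • (⊤ : Submodule R M))
              (fun a ha m => Submodule.smul_mem_smul ha trivial))).mkQ) ≃ₗ[R]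
        (((Submodule.colon (P : Submodule R R) (maximalIdeal R : Submodule R R) ⊓
              Submodule.colon (P • (⊤ : Submodule R M)) (⊤ : Submodule R M)).map
            (P : Submodule R R).mkQ) ×
          ((modColon (P • (⊤ : Submodule R M)) (maximalIdeal R)).map
            (P • (⊤ : Submodule R M)).mkQ))) := by
  classical
  set N : Submodule R M := P • (⊤ : Submodule R M) with hN
  set Jext : Ideal (TrivSqZeroExt R M) :=
    idealProd P N (fun a ha m => Submodule.smul_mem_smul ha trivial) with hJ
  set K : Ideal (TrivSqZeroExt R M) :=
    idealProd (maximalIdeal R) (⊤ : Submodule R M) (fun _ _ _ => trivial) with hK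
  set A : Ideal R := Submodule.colon (P : Submodule R R) (maximalIdeal R : Submodule R R) ⊓
    Submodule.colon N (⊤ : Submodule R M) with hA
  set B : Submodule R M := modColon N (maximalIdeal R) with hB
  set C : Submodule R (TrivSqZeroExt R M) :=
    Submodule.restrictScalars R (Submodule.colon Jext K) with hC
  have hmemC : ∀ x : TrivSqZeroExt R M, x ∈ C ↔ x.fst ∈ A ∧ x.snd ∈ B := by
    intro x
    constructor
    · intro hx
      rw [hC, Submodule.restrictScalars_mem, Submodule.mem_colon] at hx
      refine ⟨Submodule.mem_inf.mpr ⟨?_, ?_⟩, ?_⟩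
      · rw [Submodule.mem_colon]
        intro b hb
        have h1 := (hx (inl b) ⟨hb, trivial⟩).1
        simpa [smul_eq_mul, fst_mul, fst_inl] using h1
      · rw [Submodule.mem_colon]
        intro q _
        have h2 := (hx (inr q) ⟨Ideal.zero_mem _, trivial⟩).2
        simpa [smul_eq_mul, snd_mul, snd_inr, fst_inr, op_smul_eq_smul] using h2
      · intro b hb
        have h2 := (hx (inl b) ⟨hb, trivial⟩).2
        simpa [smul_eq_mul, snd_mul, snd_inl, fst_inl, op_smul_eq_smul] using h2
    · rintro ⟨hfst, hm⟩
      rw [hA, Submodule.mem_inf, Submodule.mem_colon, Submodule.mem_colon] at hfst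
      obtain ⟨ha1, ha2⟩ := hfst
      rw [hC, Submodule.restrictScalars_mem, Submodule.mem_colon]
      rintro p ⟨hp1, -⟩
      refine ⟨?_, ?_⟩
      · show (x * p).fst ∈ P
        rw [fst_mul]
        exact ha1 p.fst hp1
      · show (x * p).snd ∈ N
        rw [snd_mul, op_smul_eq_smul]
        exact N.add_mem (ha2 p.snd trivial) (hm p.fst hp1)
  have memA : ∀ x : TrivSqZeroExt R M, x ∈ C → x.fst ∈ A := fun x hx => ((hmemC x).mp hx).1
  have memB : ∀ x : TrivSqZeroExt R M, x ∈ C → x.snd ∈ B := fun x hx => ((hmemC x).mp hx).2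
  have hAmem : ∀ u : R ⧸ (P : Submodule R R),
      u ∈ A.map (P : Submodule R R).mkQ ↔ ∃ a ∈ A, (P : Submodule R R).mkQ a = u := fun u =>
    Ideal.mem_map_iff_of_surjective (Ideal.Quotient.mk P) Ideal.Quotient.mk_surjective
  let F : C →ₗ[R] ↥(A.map (P : Submodule R R).mkQ) × ↥(B.map N.mkQ) :=
    { toFun := fun c =>
        (⟨(P : Submodule R R).mkQ (c : TrivSqZeroExt R M).fst,
            (hAmem _).mpr ⟨_, memA _ c.2, rfl⟩⟩,
         ⟨N.mkQ (c : TrivSqZeroExt R M).snd, ⟨_, memB _ c.2, rfl⟩⟩)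
      map_add' := fun x y => by
        refine Prod.ext (Subtype.ext ?_) (Subtype.ext ?_) <;> simp
      map_smul' := fun r x => by
        refine Prod.ext (Subtype.ext ?_) (Subtype.ext ?_) <;>
          simp [← Submodule.Quotient.mk_smul] <;> rfl }
  have hsurj : Function.Surjective F := by
    rintro ⟨⟨u, hu⟩, ⟨v, m, hm, rfl⟩⟩
    obtain ⟨a, ha, rfl⟩ := (hAmem u).mp hu
    exact ⟨⟨(a, m), (hmemC (a, m)).mpr ⟨ha, hm⟩⟩, rfl⟩
  let G : C →ₗ[R] (TrivSqZeroExt R M ⧸ Submodule.restrictScalars R Jext) :=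
    (Submodule.restrictScalars R Jext).mkQ.comp C.subtype
  have hrange : LinearMap.range G = C.map (Submodule.restrictScalars R Jext).mkQ := by
    rw [LinearMap.range_comp, Submodule.range_subtype]
  have hker : LinearMap.ker G = LinearMap.ker F := by
    ext c
    have h1 : (G c = 0) ↔
        ((c : TrivSqZeroExt R M).fst ∈ P ∧ (c : TrivSqZeroExt R M).snd ∈ N) := by
      rw [show G c = Submodule.Quotient.mk (c : TrivSqZeroExt R M) from rfl,
        Submodule.Quotient.mk_eq_zero]
      exact Iff.rfl
    have h2 : (F c = 0) ↔
        ((c : TrivSqZeroExt R M).fst ∈ P ∧ (c : TrivSqZeroExt R M).snd ∈ N) := by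
      rw [Prod.ext_iff]
      simp only [F, LinearMap.coe_mk, AddHom.coe_mk, Prod.fst_zero, Prod.snd_zero,
        Subtype.ext_iff, ZeroMemClass.coe_zero, Submodule.mkQ_apply,
        Submodule.Quotient.mk_eq_zero]
    simp only [LinearMap.mem_ker, h1, h2]
  exact ⟨(LinearEquiv.ofEq _ _ hrange.symm) ≪≫ₗ G.quotKerEquivRange.symm ≪≫ₗ
    Submodule.quotEquivOfEq _ _ hker ≪≫ₗ F.quotKerEquivOfSurjective hsurj⟩

/-- For an `𝔪`-primary ideal `I` of a Noetherian local ring `(R, 𝔪)`, a finitely generated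
`R`-module `M`, and `J = I × IM ⊆ R ⋉ M`, the `R`-module `(J^(n+1) : 𝔪 × M)/J^(n+1)` is
isomorphic to `(((I^(n+1) : 𝔪) ∩ (I^(n+1)M :_R M))/I^(n+1)) × ((I^(n+1)M :_M 𝔪)/I^(n+1)M)`. -/
theorem socle_quotient_idealization_iso (R M : Type*) [CommRing R] [IsNoetherianRing R]
    [IsLocalRing R] [AddCommGroup M] [Module R M] [Module Rᵐᵒᵖ M] [IsCentralScalar R M]
    [Module.Finite R M] (I : Ideal R) (hI : I.IsPrimary ∧ I.radical = maximalIdeal R)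
    (n : ℕ) :
    Nonempty
      (((Submodule.restrictScalars R
            (Submodule.colon
              (idealProd (I ^ (n + 1)) ((I ^ (n + 1)) • (⊤ : Submodule R M))
                (fun a ha m => Submodule.smul_mem_smul ha trivial))
              (idealProd (maximalIdeal R) (⊤ : Submodule R M) (fun _ _ _ => trivial)))).map
          (Submodule.restrictScalars R
            (idealProd (I ^ (n + 1)) ((I ^ (n + 1)) • (⊤ : Submodule R M))
              (fun a ha m => Submodule.smul_mem_smul ha trivial))).mkQ) ≃ₗ[R]
        (((Submodule.colon (I ^ (n + 1) : Submodule R R) (maximalIdeal R : Submodule R R) ⊓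
              Submodule.colon ((I ^ (n + 1)) • (⊤ : Submodule R M)) (⊤ : Submodule R M)).map
            (I ^ (n + 1) : Submodule R R).mkQ) ×
          ((modColon ((I ^ (n + 1)) • (⊤ : Submodule R M)) (maximalIdeal R)).map
            ((I ^ (n + 1)) • (⊤ : Submodule R M)).mkQ))) := by
  exact socle_aux R M (I ^ (n + 1))
end

section
/- Let (R, 𝔪) be a Noetherian local ring, M a nonzero finitely generated R-module, I an 𝔪-primary ideal, and J = I × IM ⊆ R ⋉ M. Then for all n ≥ 0: ℓ_R((I^{n+1}M :_M 𝔪)/I^{n+1}M) ≤ ℓ_{R⋉M}((J^{n+1} :_{R⋉M} (𝔪×M))/J^{n+1}) ≤ ℓ_R((I^{n+1} :_R 𝔪)/I^{n+1}) + ℓ_R((I^{n+1}M :_M 𝔪)/I^{n+1}M). Equivalently, ir_M(I^{n+1}M) ≤ ir_{R⋉M}(J^{n+1}) ≤ ir_R(I^{n+1}) + ir_M(I^{n+1}M). -/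
open TrivSqZeroExt IsLocalRing


open TrivSqZeroExt

/-- The length of an `R`-module `M`: the Krull dimension of its lattice of submodules,
i.e. the supremum of the lengths of chains of submodules of `M`. -/
noncomputable def moduleLength (R M : Type*) [CommRing R] [AddCommGroup M] [Module R M] :
    WithBot ℕ∞ :=
  Order.krullDim (Submodule R M)

/-- The index of reducibility of a submodule `N ⊆ M` of finite colength over the local ring
`(R, 𝔪)`: the length `ℓ_R((N :_M 𝔪)/N)` of the socle of `M/N`. -/
noncomputable def indexOfReducibility {R M : Type*} [CommRing R] [IsLocalRing R]
    [AddCommGroup M] [Module R M] (N : Submodule R M) : WithBot ℕ∞ :=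
  moduleLength R ((modColon N (maximalIdeal R)).map N.mkQ)

instance tszeIsLocalRing {R M : Type*} [CommRing R] [IsLocalRing R] [AddCommGroup M]
    [Module R M] [Module Rᵐᵒᵖ M] [IsCentralScalar R M] :
    IsLocalRing (TrivSqZeroExt R M) := by
  haveI : Nontrivial (TrivSqZeroExt R M) :=
    ⟨⟨0, 1, fun h => zero_ne_one (congrArg TrivSqZeroExt.fst h)⟩⟩
  refine IsLocalRing.of_isUnit_or_isUnit_of_isUnit_add (fun {a b} h => ?_)
  have hf : IsUnit (a.fst + b.fst) := by
    have := h.map (TrivSqZeroExt.fstHom R R M)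
    simpa using this
  rcases IsLocalRing.isUnit_or_isUnit_of_isUnit_add hf with h' | h'
  · left
    rcases h'.nonempty_invertible with ⟨inv⟩
    letI := inv
    letI := TrivSqZeroExt.invertibleOfInvertibleFst a
    exact isUnit_of_invertible a
  · right
    rcases h'.nonempty_invertible with ⟨inv⟩
    letI := inv
    letI := TrivSqZeroExt.invertibleOfInvertibleFst b
    exact isUnit_of_invertible b


/-!
By `I × IM = I (R ⋉ M)` we have `J ^ (n + 1) = I ^ (n + 1) × I ^ (n + 1) M`, and its colon by
`𝔪 × M` lies between `I ^ (n + 1) × (I ^ (n + 1) M :_M 𝔪)` and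
`(I ^ (n + 1) :_R 𝔪) × (I ^ (n + 1) M :_M 𝔪)`. Lengths are Krull dimensions of intervals of
submodules. For the lower bound, `N ↦ I ^ (n + 1) × N` is strictly monotone. For the upper bound,
an ideal `X` of `R ⋉ M` is determined, among the ideals containing it, by its image in `R` and
its trace on `M`, so `X ↦ (fst X, X ∩ M)` is strictly monotone into a product of socle
intervals, and the Krull dimension of a product is at most the sum of the Krull dimensions.
-/

namespace Order

variable {α β : Type*} [Preorder α] [Preorder β]

lemma length_le_height_fst_add_height_snd (p : LTSeries (α × β)) :
    (p.length : ℕ∞) ≤ height p.last.1 + height p.last.2 := by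
  induction p using RelSeries.inductionOn' with
  | singleton x => simp
  | snoc p x hx ih =>
    rw [RelSeries.snoc_length, RelSeries.last_snoc, Nat.cast_add, Nat.cast_one]
    rcases Prod.lt_iff.mp hx with ⟨h₁, h₂⟩ | ⟨h₁, h₂⟩
    · calc (p.length : ℕ∞) + 1 ≤ height p.last.1 + 1 + height p.last.2 := by
            rw [add_right_comm]; gcongr
        _ ≤ height x.1 + height x.2 := add_le_add (height_add_one_le h₁) (height_mono h₂)
    · calc (p.length : ℕ∞) + 1 ≤ height p.last.1 + (height p.last.2 + 1) := by
            rw [← add_assoc]; gcongr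
        _ ≤ height x.1 + height x.2 := add_le_add (height_mono h₁) (height_add_one_le h₂)

lemma krullDim_prod_le : krullDim (α × β) ≤ krullDim α + krullDim β :=
  iSup_le fun p => calc
    (p.length : WithBot ℕ∞) ≤ ↑(height p.last.1 + height p.last.2) := by
      exact_mod_cast length_le_height_fst_add_height_snd p
    _ ≤ krullDim α + krullDim β := by
      rw [WithBot.coe_add]
      exact add_le_add (height_le_krullDim _) (height_le_krullDim _)

end Order

namespace Submodule

variable {R M : Type*} [CommRing R] [AddCommGroup M] [Module R M]

lemma le_modColon (N : Submodule R M) (I : Ideal R) : N ≤ modColon N I :=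
  fun _ hm r _ => N.smul_mem r hm

def iccOrderIsoMapMkQ {N C : Submodule R M} (h : N ≤ C) :
    Set.Icc N C ≃o Submodule R (C.map N.mkQ) :=
  Equiv.toOrderIso
    { toFun := fun P => ((P : Submodule R M).map N.mkQ).comap (C.map N.mkQ).subtype
      invFun := fun S => ⟨(S.map (C.map N.mkQ).subtype).comap N.mkQ, le_comap_mkQ N _,
        (comap_mono (map_subtype_le _ S)).trans (by rw [comap_map_mkQ, sup_eq_right.mpr h])⟩
      left_inv := fun P => Subtype.ext <| by
        dsimp only
        rw [map_comap_subtype, inf_eq_right.mpr (map_mono P.2.2), comap_map_mkQ,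
          sup_eq_right.mpr P.2.1]
      right_inv := fun S => by
        dsimp only
        rw [map_comap_eq_of_surjective (mkQ_surjective N), comap_map_eq_of_injective
          (subtype_injective _)] }
    (fun _ _ h => comap_mono (map_mono h))
    (fun _ _ h => comap_mono (map_mono h))

end Submodule

lemma indexOfReducibility_eq_krullDim_Icc {R M : Type*} [CommRing R] [IsLocalRing R]
    [AddCommGroup M] [Module R M] (N : Submodule R M) :
    indexOfReducibility N = Order.krullDim (Set.Icc N (modColon N (maximalIdeal R))) :=
  (Order.krullDim_eq_of_orderIso (Submodule.iccOrderIsoMapMkQ (N.le_modColon _))).symm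

namespace TrivSqZeroExt

open Order

variable {R M : Type*} [CommRing R] [AddCommGroup M] [Module R M] [Module Rᵐᵒᵖ M]
  [IsCentralScalar R M]

lemma mem_idealProd {I : Ideal R} {N : Submodule R M} {h} {x : TrivSqZeroExt R M} :
    x ∈ idealProd I N h ↔ x.fst ∈ I ∧ x.snd ∈ N := Iff.rfl

lemma maximalIdeal_eq_comap_fstHom [IsLocalRing R] :
    maximalIdeal (TrivSqZeroExt R M) = (maximalIdeal R).comap (fstHom R R M) := by
  ext x
  simp only [Ideal.mem_comap, mem_maximalIdeal, mem_nonunits_iff, isUnit_iff_isUnit_fst,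
    fstHom_apply]

lemma map_inlHom_eq_idealProd (I : Ideal R) :
    I.map (inlHom R M) =
      idealProd I (I • ⊤) (fun _ ha _ => Submodule.smul_mem_smul ha trivial) := by
  refine le_antisymm (Ideal.map_le_iff_le_comap.mpr fun a ha => ⟨ha, by simp⟩) ?_
  rintro x ⟨hx₁, hx₂⟩
  rw [← inl_fst_add_inr_snd_eq x]
  refine Ideal.add_mem _ (Ideal.mem_map_of_mem _ hx₁) ?_
  refine Submodule.smul_induction_on hx₂ (fun a ha m _ => ?_) (fun m m' hm hm' => ?_)
  · rw [← inl_mul_inr]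
    exact Ideal.mul_mem_right _ _ (Ideal.mem_map_of_mem _ ha)
  · rw [inr_add]
    exact Ideal.add_mem _ hm hm'

lemma idealProd_smul_top_pow (I : Ideal R) (n : ℕ) :
    idealProd I (I • ⊤) (fun _ ha _ => Submodule.smul_mem_smul ha trivial) ^ n =
      idealProd (I ^ n) (I ^ n • ⊤ : Submodule R M)
        (fun _ ha _ => Submodule.smul_mem_smul ha trivial) := by
  rw [← map_inlHom_eq_idealProd, ← map_inlHom_eq_idealProd, Ideal.map_pow]

variable {I : Ideal R} {N : Submodule R M}

lemma idealProd_le_modColon (h : ∀ a ∈ I, ∀ m : M, a • m ∈ N) (𝔞 : Ideal R) :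
    idealProd I (modColon N 𝔞) (fun a ha m => N.le_modColon 𝔞 (h a ha m)) ≤
      modColon (idealProd I N h : Submodule (TrivSqZeroExt R M) (TrivSqZeroExt R M))
        (𝔞.comap (fstHom R R M)) := by
  rintro x ⟨hx₁, hx₂⟩ r hr
  rw [smul_eq_mul, mem_idealProd, fst_mul, snd_mul, op_smul_eq_smul]
  exact ⟨I.mul_mem_left _ hx₁, N.add_mem (hx₂ _ hr) (h _ hx₁ _)⟩

lemma modColon_idealProd_le (h : ∀ a ∈ I, ∀ m : M, a • m ∈ N) (𝔞 : Ideal R) :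
    modColon (idealProd I N h : Submodule (TrivSqZeroExt R M) (TrivSqZeroExt R M))
        (𝔞.comap (fstHom R R M)) ≤
      idealProd (modColon I 𝔞) (modColon N 𝔞)
        (fun a ha m r hr => by rw [smul_smul]; exact h _ (ha r hr) m) := by
  intro x hx
  refine ⟨fun r hr => ?_, fun r hr => ?_⟩
  · simpa using (hx (inl r) (by simpa using hr)).1
  · simpa using (hx (inl r) (by simpa using hr)).2

lemma map_fstHom_idealProd (h : ∀ a ∈ I, ∀ m : M, a • m ∈ N) :
    (idealProd I N h).map (fstHom R R M) = I := by
  refine le_antisymm (Ideal.map_le_iff_le_comap.mpr fun x hx => hx.1) fun a ha => ?_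
  have : inl a ∈ idealProd I N h := ⟨ha, by simp⟩
  simpa using Ideal.mem_map_of_mem (fstHom R R M) this

lemma comap_inrHom_idealProd (h : ∀ a ∈ I, ∀ m : M, a • m ∈ N) :
    ((idealProd I N h).restrictScalars R).comap (inrHom R M) = N := by
  ext m
  simp [mem_idealProd]

lemma idealProd_mono {I' : Ideal R} {N' : Submodule R M} {h : ∀ a ∈ I, ∀ m : M, a • m ∈ N}
    {h' : ∀ a ∈ I', ∀ m : M, a • m ∈ N'} (hI : I ≤ I') (hN : N ≤ N') :
    idealProd I N h ≤ idealProd I' N' h' :=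
  fun _ hx => ⟨hI hx.1, hN hx.2⟩

lemma idealProd_lt_idealProd {N' : Submodule R M}
    {h : ∀ a ∈ I, ∀ m : M, a • m ∈ N} {h' : ∀ a ∈ I, ∀ m : M, a • m ∈ N'} (hN : N < N') :
    idealProd I N h < idealProd I N' h' :=
  lt_of_le_of_ne (idealProd_mono le_rfl hN.le) fun e => hN.ne <| by
    rw [← comap_inrHom_idealProd h, ← comap_inrHom_idealProd h', e]

lemma eq_of_le_of_map_fstHom_eq_of_comap_inrHom_eq {X Y : Ideal (TrivSqZeroExt R M)} (hXY : X ≤ Y)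
    (hfst : X.map (fstHom R R M) = Y.map (fstHom R R M))
    (hinr : (X.restrictScalars R).comap (inrHom R M) = (Y.restrictScalars R).comap (inrHom R M)) :
    X = Y := by
  refine le_antisymm hXY fun y hy => ?_
  have hy₁ : fstHom R R M y ∈ Y.map (fstHom R R M) := Ideal.mem_map_of_mem _ hy
  rw [← hfst, Ideal.mem_map_iff_of_surjective _ fst_surjective] at hy₁
  obtain ⟨x, hx, hxy⟩ := hy₁
  have hdiff : y.snd - x.snd ∈ (Y.restrictScalars R).comap (inrHom R M) := by
    change inr (y.snd - x.snd) ∈ Y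
    convert Y.sub_mem hy (hXY hx) using 1
    ext <;> simp_all
  rw [← hinr] at hdiff
  convert X.add_mem hx hdiff using 1
  ext <;> simp_all

lemma krullDim_Icc_modColon_le_krullDim_Icc_modColon_idealProd
    (h : ∀ a ∈ I, ∀ m : M, a • m ∈ N) (𝔞 : Ideal R) :
    krullDim (Set.Icc N (modColon N 𝔞)) ≤
      krullDim (Set.Icc (idealProd I N h : Submodule (TrivSqZeroExt R M) (TrivSqZeroExt R M))
        (modColon (idealProd I N h) (𝔞.comap (fstHom R R M)))) :=
  krullDim_le_of_strictMono
    (fun N' => ⟨idealProd I N'.1 fun a ha m => N'.2.1 (h a ha m), idealProd_mono le_rfl N'.2.1,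
      (idealProd_mono le_rfl N'.2.2).trans (idealProd_le_modColon h 𝔞)⟩)
    fun _ _ hlt => Subtype.mk_lt_mk.mpr (idealProd_lt_idealProd hlt)

lemma map_fstHom_mem_Icc_modColon (h : ∀ a ∈ I, ∀ m : M, a • m ∈ N) {𝔞 : Ideal R}
    {X : Ideal (TrivSqZeroExt R M)}
    (hX : X ∈ Set.Icc (idealProd I N h : Submodule (TrivSqZeroExt R M) (TrivSqZeroExt R M))
      (modColon (idealProd I N h) (𝔞.comap (fstHom R R M)))) :
    X.map (fstHom R R M) ∈ Set.Icc (I : Submodule R R) (modColon I 𝔞) :=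
  ⟨(map_fstHom_idealProd h).symm.le.trans (Ideal.map_mono hX.1),
    (Ideal.map_mono (hX.2.trans (modColon_idealProd_le h 𝔞))).trans
      (map_fstHom_idealProd _).le⟩

lemma comap_inrHom_mem_Icc_modColon (h : ∀ a ∈ I, ∀ m : M, a • m ∈ N) {𝔞 : Ideal R}
    {X : Ideal (TrivSqZeroExt R M)}
    (hX : X ∈ Set.Icc (idealProd I N h : Submodule (TrivSqZeroExt R M) (TrivSqZeroExt R M))
      (modColon (idealProd I N h) (𝔞.comap (fstHom R R M)))) :
    (X.restrictScalars R).comap (inrHom R M) ∈ Set.Icc N (modColon N 𝔞) :=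
  ⟨(comap_inrHom_idealProd h).symm.le.trans
      (Submodule.comap_mono (Submodule.restrictScalars_mono R hX.1)),
    (Submodule.comap_mono
      (Submodule.restrictScalars_mono R (hX.2.trans (modColon_idealProd_le h 𝔞)))).trans
      (comap_inrHom_idealProd _).le⟩

lemma krullDim_Icc_modColon_idealProd_le (h : ∀ a ∈ I, ∀ m : M, a • m ∈ N) (𝔞 : Ideal R) :
    krullDim (Set.Icc (idealProd I N h : Submodule (TrivSqZeroExt R M) (TrivSqZeroExt R M))
        (modColon (idealProd I N h) (𝔞.comap (fstHom R R M)))) ≤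
      krullDim (Set.Icc (I : Submodule R R) (modColon I 𝔞) × Set.Icc N (modColon N 𝔞)) := by
  refine krullDim_le_of_strictMono (fun X =>
    (⟨_, map_fstHom_mem_Icc_modColon h X.2⟩, ⟨_, comap_inrHom_mem_Icc_modColon h X.2⟩))
    fun X Y hXY => lt_of_le_of_ne
      ⟨Ideal.map_mono hXY.le, Submodule.comap_mono (Submodule.restrictScalars_mono R hXY.le)⟩
      fun e => hXY.ne ?_
  exact Subtype.ext (eq_of_le_of_map_fstHom_eq_of_comap_inrHom_eq hXY.le
    (congrArg (·.1.1) e) (congrArg (·.2.1) e))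

end TrivSqZeroExt

theorem ir_le_ir_idealization_le_general (R M : Type*) [CommRing R]
    [IsLocalRing R] [AddCommGroup M] [Module R M] [Module Rᵐᵒᵖ M] [IsCentralScalar R M]
    (I : Ideal R) (n : ℕ) :
    indexOfReducibility ((I ^ (n + 1)) • (⊤ : Submodule R M)) ≤
        indexOfReducibility
          ((idealProd I (I • (⊤ : Submodule R M))
              (fun a ha m => Submodule.smul_mem_smul ha trivial) : Ideal (TrivSqZeroExt R M)) ^
            (n + 1) : Submodule (TrivSqZeroExt R M) (TrivSqZeroExt R M)) ∧
      indexOfReducibility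
          ((idealProd I (I • (⊤ : Submodule R M))
              (fun a ha m => Submodule.smul_mem_smul ha trivial) : Ideal (TrivSqZeroExt R M)) ^
            (n + 1) : Submodule (TrivSqZeroExt R M) (TrivSqZeroExt R M)) ≤
        indexOfReducibility (I ^ (n + 1) : Submodule R R) +
          indexOfReducibility ((I ^ (n + 1)) • (⊤ : Submodule R M)) := by
  rw [indexOfReducibility_eq_krullDim_Icc, indexOfReducibility_eq_krullDim_Icc,
    indexOfReducibility_eq_krullDim_Icc, idealProd_smul_top_pow, maximalIdeal_eq_comap_fstHom]
  exact ⟨krullDim_Icc_modColon_le_krullDim_Icc_modColon_idealProd _ _,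
    (krullDim_Icc_modColon_idealProd_le _ _).trans Order.krullDim_prod_le⟩

/-- `ir_M(I^(n+1)M) ≤ ir_{R⋉M}(J^(n+1)) ≤ ir_R(I^(n+1)) + ir_M(I^(n+1)M)` for all `n ≥ 0`,
where `J = I × IM` and the index of reducibility is the length of the corresponding socle. -/
theorem ir_le_ir_idealization_le (R M : Type*) [CommRing R] [IsNoetherianRing R]
    [IsLocalRing R] [AddCommGroup M] [Module R M] [Module Rᵐᵒᵖ M] [IsCentralScalar R M]
    [Module.Finite R M] (hM : Nontrivial M) (I : Ideal R)
    (hI : I.IsPrimary ∧ I.radical = maximalIdeal R) (n : ℕ) :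
    indexOfReducibility ((I ^ (n + 1)) • (⊤ : Submodule R M)) ≤
        indexOfReducibility
          ((idealProd I (I • (⊤ : Submodule R M))
              (fun a ha m => Submodule.smul_mem_smul ha trivial) : Ideal (TrivSqZeroExt R M)) ^
            (n + 1) : Submodule (TrivSqZeroExt R M) (TrivSqZeroExt R M)) ∧
      indexOfReducibility
          ((idealProd I (I • (⊤ : Submodule R M))
              (fun a ha m => Submodule.smul_mem_smul ha trivial) : Ideal (TrivSqZeroExt R M)) ^
            (n + 1) : Submodule (TrivSqZeroExt R M) (TrivSqZeroExt R M)) ≤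
        indexOfReducibility (I ^ (n + 1) : Submodule R R) +
          indexOfReducibility ((I ^ (n + 1)) • (⊤ : Submodule R M)) :=
  ir_le_ir_idealization_le_general R M I n
end

section
/- If Q is a parameter ideal of a Cohen-Macaulay local ring R and M is a maximal Cohen-Macaulay R-module, then the ideal Q̄ of R ⋉ M generated by {(r, 0) : r ∈ a generating set of Q} equals Q × QM and is a parameter ideal of R ⋉ M. -/
universe u

open TrivSqZeroExt IsLocalRing


open TrivSqZeroExt

/-- `Q` is a parameter ideal of the `d`-dimensional local ring `R` if it is generated by
`d` elements and is `𝔪`-primary. -/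
def IsParameterIdeal {R : Type u} [CommRing R] [IsLocalRing R] (Q : Ideal R) (d : ℕ) : Prop :=
  ∃ s : Finset R, Q = Ideal.span (s : Set R) ∧ s.card = d ∧
    Q.radical = IsLocalRing.maximalIdeal R

/-- If `Q` is a parameter ideal of a Cohen-Macaulay local ring `R` and `M` is a maximal
Cohen-Macaulay `R`-module, then the ideal `Q̄` of `R ⋉ M` generated by the elements `(r, 0)`
for `r ∈ Q` equals `Q × QM` and is a parameter ideal of `R ⋉ M`. -/
theorem map_parameter_ideal_idealization (R M : Type u) [CommRing R] [IsNoetherianRing R]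
    [IsLocalRing R] [AddCommGroup M] [Module R M] [Module Rᵐᵒᵖ M] [IsCentralScalar R M]
    [Module.Finite R M] (d : ℕ) (hdim : ringKrullDim R = d) (Q : Ideal R)
    (hQ : IsParameterIdeal Q d) :
    Ideal.map (TrivSqZeroExt.inlHom R M) Q =
        idealProd Q (Q • (⊤ : Submodule R M))
          (fun a ha m => Submodule.smul_mem_smul ha trivial) ∧
      IsParameterIdeal (Ideal.map (TrivSqZeroExt.inlHom R M) Q) d := by
  obtain ⟨s, hs, hcard, hrad⟩ := hQ
  have hmap : Ideal.map (TrivSqZeroExt.inlHom R M) Q =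
      idealProd Q (Q • (⊤ : Submodule R M))
        (fun a ha m => Submodule.smul_mem_smul ha trivial) := by
    apply le_antisymm
    · rw [Ideal.map_le_iff_le_comap]
      intro a ha
      exact ⟨by simpa using ha, by simp⟩
    · rintro x ⟨h1, h2⟩
      have hx : x = inl x.fst + inr x.snd := (inl_fst_add_inr_snd_eq x).symm
      rw [hx]
      refine Ideal.add_mem _ (Ideal.mem_map_of_mem _ h1) ?_
      refine Submodule.smul_induction_on h2 (fun r hr m _ => ?_) (fun m₁ m₂ hm₁ hm₂ => ?_)
      · rw [← inl_mul_inr]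
        exact Ideal.mul_mem_right _ _ (Ideal.mem_map_of_mem _ hr)
      · rw [inr_add]
        exact Ideal.add_mem _ hm₁ hm₂
  classical
  refine ⟨hmap, s.image (TrivSqZeroExt.inlHom R M), ?_, ?_, ?_⟩
  · rw [hs, Ideal.map_span, Finset.coe_image]
  · rw [Finset.card_image_of_injective _ (fun a b h => by simpa using congrArg TrivSqZeroExt.fst h), hcard]
  · ext x
    rw [Ideal.mem_radical_iff, IsLocalRing.mem_maximalIdeal, mem_nonunits_iff,
      isUnit_iff_isUnit_fst, ← mem_nonunits_iff, ← IsLocalRing.mem_maximalIdeal, ← hrad, Ideal.mem_radical_iff]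
    constructor
    · rintro ⟨n, hn⟩
      rw [hmap] at hn
      exact ⟨n, hn.1⟩
    · rintro ⟨n, hn⟩
      refine ⟨n + 1, ?_⟩
      rw [hmap]
      constructor
      · rw [fst_pow, pow_succ]
        exact Ideal.mul_mem_right _ _ hn
      · rw [snd_pow]
        exact nsmul_mem (Submodule.smul_mem_smul hn Submodule.mem_top) _
end
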